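/- Fix an integer m ≥ 1 and a real λ with 1/2 < λ ≤ 1. For a positive integer n, let A be a subset chosen uniformly at random from F_{λ,n}, let X̄ = C(|A|, m), and let σ̄² = E[X̄²] − (E[X̄])². Then for every ε > 0 there exists n₀ such that for all n ≥ n₀: σ̄² ≤ (1 + ε) · n^{2m−1} / (m!)². -/

import Mathlib

/-!
The variance is at most the mean square deviation from any constant; take the constant
`C(⌊n/2⌋, m)`. Since `λ > 1/2`, complementation shows that `F_{λ,n}` contains at least half of
all subsets, so it suffices to bound the sum of `(C(|A|, m) - C(⌊n/2⌋, m))²` over all `2ⁿ`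
subsets, a binomial sum over `k = |A|`. For `k ≤ a ≈ (1/2 + δ) n` the summand is at most
`C(a, m-1)² (k - ⌊n/2⌋)²`, whose binomial average is about `n/4`. For `k > a` it is at most
`C(n, m)² ((n - 2k) / (2a + 2 - n))⁴`, and the fourth central moment
`∑ C(n, k) (n - 2k)⁴ = (3n² - 2n) 2ⁿ` makes this part `O(n^(2m-2))`. With `δ = 1/(16 m)`, the
estimates `(1 + 2δ)^(2m-2) ≤ 4/3` and `m² ≤ 4^(m-1)` bound the first part by `n^(2m-1)/(m!)²`.
-/

/-- `Fam n l` is the family `F_{λ,n}` of all subsets of `{1,…,n}` of size at most `λ·n`. -/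
noncomputable def Fam (n : ℕ) (l : ℝ) : Finset (Finset (Fin n)) :=
  Finset.univ.filter (fun A => (A.card : ℝ) ≤ l * n)

open Finset

theorem sum_sq_div_card_sub_sq_le {ι : Type*} (s : Finset ι) (f : ι → ℝ) (c : ℝ) :
    (∑ i ∈ s, f i ^ 2) / #s - ((∑ i ∈ s, f i) / #s) ^ 2 ≤ (∑ i ∈ s, (f i - c) ^ 2) / #s := by
  rcases s.eq_empty_or_nonempty with rfl | hs
  · simp
  have hcard : (#s : ℝ) ≠ 0 := by exact_mod_cast hs.card_pos.ne'
  have hexpand : ∑ i ∈ s, (f i - c) ^ 2 = ∑ i ∈ s, f i ^ 2 - 2 * c * ∑ i ∈ s, f i + #s * c ^ 2 := by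
    simp only [sub_sq', mul_right_comm 2 (f _) c, sum_add_distrib, sum_sub_distrib, ← mul_sum,
      sum_const, nsmul_eq_mul]
    ring
  have hgap : (∑ i ∈ s, (f i - c) ^ 2) / #s - ((∑ i ∈ s, f i ^ 2) / #s - ((∑ i ∈ s, f i) / #s) ^ 2)
      = ((∑ i ∈ s, f i) / #s - c) ^ 2 := by
    rw [hexpand]; field_simp; ring
  linarith [sq_nonneg ((∑ i ∈ s, f i) / #s - c)]

theorem two_pow_le_two_mul_card_fam {n : ℕ} {l : ℝ} (hl : 1 / 2 ≤ l) :
    2 ^ n ≤ 2 * #(Fam n l) := by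
  classical
  have hcompl : #(univ \ Fam n l) ≤ #(Fam n l) := by
    refine card_le_card_of_injOn compl (fun A hA => ?_) compl_injective.injOn
    simp only [mem_coe, mem_sdiff, mem_univ, true_and, Fam, mem_filter, not_le] at hA
    have hA_le : (#A : ℝ) ≤ n := by exact_mod_cast card_le_univ A |>.trans_eq (Fintype.card_fin n)
    simp only [Fam, mem_coe, mem_filter, mem_univ, true_and, card_compl, Fintype.card_fin]
    rw [Nat.cast_sub (by exact_mod_cast hA_le)]
    nlinarith
  have hsplit := card_sdiff_add_card_eq_card (subset_univ (Fam n l))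
  rw [card_univ, Fintype.card_finset, Fintype.card_fin] at hsplit
  omega

theorem sum_finset_fin_apply_card {M : Type*} [AddCommMonoid M] (n : ℕ) (g : ℕ → M) :
    ∑ A : Finset (Fin n), g #A = ∑ k ∈ range (n + 1), n.choose k • g k := by
  simpa [powerset_univ] using sum_powerset_apply_card g (x := (univ : Finset (Fin n)))

theorem sum_range_succ_choose_mul_sub_two_mul_pow (n p : ℕ) :
    ∑ k ∈ range (n + 1 + 1), ((n + 1).choose k : ℝ) * (((n + 1 : ℕ) : ℝ) - 2 * k) ^ p =
      ∑ k ∈ range (n + 1),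
        (n.choose k : ℝ) * (((n : ℝ) - 2 * k + 1) ^ p + ((n : ℝ) - 2 * k - 1) ^ p) := by
  rw [sum_choose_succ_mul (fun k _ => (((n + 1 : ℕ) : ℝ) - 2 * k) ^ p), ← sum_add_distrib]
  refine sum_congr rfl fun k _ => ?_
  push_cast
  ring

theorem cast_sum_range_choose {R : Type*} [Semiring R] (n : ℕ) :
    ∑ k ∈ range (n + 1), (n.choose k : R) = 2 ^ n := by
  rw [← Nat.cast_sum, Nat.sum_range_choose, Nat.cast_pow, Nat.cast_ofNat]

theorem sum_range_choose_mul_sub_two_mul (n : ℕ) :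
    ∑ k ∈ range (n + 1), (n.choose k : ℝ) * ((n : ℝ) - 2 * k) = 0 := by
  induction n with
  | zero => simp
  | succ n ih =>
    calc _ = ∑ k ∈ range (n + 1), 2 * ((n.choose k : ℝ) * ((n : ℝ) - 2 * k)) := by
          simpa only [pow_one] using (sum_range_succ_choose_mul_sub_two_mul_pow n 1).trans
            (sum_congr rfl fun k _ => by ring)
      _ = 0 := by rw [← mul_sum, ih, mul_zero]

theorem sum_range_choose_mul_sub_two_mul_sq (n : ℕ) :
    ∑ k ∈ range (n + 1), (n.choose k : ℝ) * ((n : ℝ) - 2 * k) ^ 2 = (n : ℝ) * 2 ^ n := by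
  induction n with
  | zero => simp
  | succ n ih =>
    rw [sum_range_succ_choose_mul_sub_two_mul_pow]
    calc _ = ∑ k ∈ range (n + 1),
          (2 * ((n.choose k : ℝ) * ((n : ℝ) - 2 * k) ^ 2) + 2 * (n.choose k : ℝ)) :=
          sum_congr rfl fun k _ => by ring
      _ = _ := by
          rw [sum_add_distrib, ← mul_sum, ← mul_sum, ih, cast_sum_range_choose]
          push_cast
          ring

theorem sum_range_choose_mul_sub_two_mul_pow_four (n : ℕ) :
    ∑ k ∈ range (n + 1), (n.choose k : ℝ) * ((n : ℝ) - 2 * k) ^ 4 =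
      (3 * (n : ℝ) ^ 2 - 2 * n) * 2 ^ n := by
  induction n with
  | zero => simp
  | succ n ih =>
    rw [sum_range_succ_choose_mul_sub_two_mul_pow]
    calc _ = ∑ k ∈ range (n + 1), (2 * ((n.choose k : ℝ) * ((n : ℝ) - 2 * k) ^ 4)
          + 12 * ((n.choose k : ℝ) * ((n : ℝ) - 2 * k) ^ 2) + 2 * (n.choose k : ℝ)) :=
          sum_congr rfl fun k _ => by ring
      _ = _ := by
          rw [sum_add_distrib, sum_add_distrib, ← mul_sum, ← mul_sum, ← mul_sum, ih,
            sum_range_choose_mul_sub_two_mul_sq, cast_sum_range_choose]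
          push_cast
          ring

theorem sum_range_choose_mul_sub_sq (n : ℕ) (t : ℝ) :
    ∑ k ∈ range (n + 1), (n.choose k : ℝ) * ((k : ℝ) - t) ^ 2 =
      ((n : ℝ) + (n - 2 * t) ^ 2) / 4 * 2 ^ n := by
  calc _ = ∑ k ∈ range (n + 1), ((n.choose k : ℝ) * ((n : ℝ) - 2 * k) ^ 2 / 4
        - (n - 2 * t) / 2 * ((n.choose k : ℝ) * ((n : ℝ) - 2 * k))
        + (n - 2 * t) ^ 2 / 4 * (n.choose k : ℝ)) :=
        sum_congr rfl fun k _ => by ring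
    _ = _ := by
        rw [sum_add_distrib, sum_sub_distrib, ← sum_div, ← mul_sum, ← mul_sum,
          sum_range_choose_mul_sub_two_mul_sq, sum_range_choose_mul_sub_two_mul,
          cast_sum_range_choose]
        ring

theorem choose_succ_sub_choose_succ_le (r : ℕ) {i j a : ℕ} (hij : i ≤ j) (hja : j ≤ a) :
    (j.choose (r + 1) : ℝ) - i.choose (r + 1) ≤ ((j : ℝ) - i) * a.choose r := by
  induction j, hij using Nat.le_induction with
  | base => simp
  | succ j hij ih =>
    have hpascal : ((j + 1).choose (r + 1) : ℝ) = j.choose r + j.choose (r + 1) := by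
      exact_mod_cast Nat.choose_succ_succ j r
    have hmono : (j.choose r : ℝ) ≤ a.choose r := by
      exact_mod_cast Nat.choose_le_choose r (by omega)
    push_cast
    linarith [ih (by omega)]

theorem sq_choose_succ_sub_choose_succ_le (r : ℕ) {i j a : ℕ} (hi : i ≤ a) (hj : j ≤ a) :
    ((j.choose (r + 1) : ℝ) - i.choose (r + 1)) ^ 2 ≤ (a.choose r : ℝ) ^ 2 * ((j : ℝ) - i) ^ 2 := by
  wlog hij : i ≤ j generalizing i j
  · simpa only [← neg_sub (j : ℝ), ← neg_sub (j.choose (r + 1) : ℝ), neg_sq] using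
      this hj hi (by omega)
  have hmono : (i.choose (r + 1) : ℝ) ≤ j.choose (r + 1) := by
    exact_mod_cast Nat.choose_le_choose (r + 1) hij
  rw [← mul_pow, mul_comm]
  exact pow_le_pow_left₀ (by linarith) (choose_succ_sub_choose_succ_le r hij hj) 2

theorem sq_choose_sub_choose_le (m : ℕ) {i j n : ℕ} (hi : i ≤ n) (hj : j ≤ n) :
    ((j.choose m : ℝ) - i.choose m) ^ 2 ≤ (n.choose m : ℝ) ^ 2 := by
  have hbound : |(j.choose m : ℝ) - i.choose m| ≤ n.choose m :=
    abs_sub_le_of_nonneg_of_le (by positivity) (by exact_mod_cast Nat.choose_le_choose m hj)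
      (by positivity) (by exact_mod_cast Nat.choose_le_choose m hi)
  simpa only [sq_abs] using pow_le_pow_left₀ (abs_nonneg _) hbound 2

theorem sq_choose_succ_sub_choose_succ_le_add (r : ℕ) {n a k k₀ : ℕ} (hk : k ≤ n) (hk₀a : k₀ ≤ a)
    (hk₀n : k₀ ≤ n) (ha : n < 2 * (a + 1)) :
    ((k.choose (r + 1) : ℝ) - k₀.choose (r + 1)) ^ 2 ≤
      (a.choose r : ℝ) ^ 2 * ((k : ℝ) - k₀) ^ 2 +
        (n.choose (r + 1) : ℝ) ^ 2 / (2 * (a + 1) - n) ^ 4 * ((n : ℝ) - 2 * k) ^ 4 := by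
  have hgap : (0 : ℝ) < 2 * (a + 1) - n := by
    rw [sub_pos]; exact_mod_cast ha
  by_cases hka : k ≤ a
  · have := sq_choose_succ_sub_choose_succ_le r hk₀a hka
    have : 0 ≤ (n.choose (r + 1) : ℝ) ^ 2 / (2 * (a + 1) - n) ^ 4 * ((n : ℝ) - 2 * k) ^ 4 := by
      positivity
    linarith
  · have hfar : (2 * (a + 1) - n : ℝ) ^ 4 ≤ ((n : ℝ) - 2 * k) ^ 4 := by
      rw [show ((n : ℝ) - 2 * k) ^ 4 = (2 * k - n) ^ 4 by ring]
      refine pow_le_pow_left₀ hgap.le ?_ 4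
      have : (a : ℝ) + 1 ≤ k := by exact_mod_cast (by omega : a + 1 ≤ k)
      linarith
    have := sq_choose_sub_choose_le (r + 1) hk₀n hk
    calc _ ≤ (n.choose (r + 1) : ℝ) ^ 2 / (2 * (a + 1) - n) ^ 4 * (2 * (a + 1) - n) ^ 4 := by
          rwa [div_mul_cancel₀ _ (by positivity)]
      _ ≤ (n.choose (r + 1) : ℝ) ^ 2 / (2 * (a + 1) - n) ^ 4 * ((n : ℝ) - 2 * k) ^ 4 := by
          gcongr
      _ ≤ _ := le_add_of_nonneg_left (by positivity)

theorem sum_sq_choose_card_sub_le (r n a : ℕ) (hna : n / 2 ≤ a) (ha : n < 2 * (a + 1)) :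
    ∑ A : Finset (Fin n), (((#A).choose (r + 1) : ℝ) - (n / 2).choose (r + 1)) ^ 2 ≤
      ((a.choose r : ℝ) ^ 2 * (n + 1) / 4 +
        (n.choose (r + 1) : ℝ) ^ 2 / (2 * (a + 1) - n) ^ 4 * (3 * n ^ 2)) * 2 ^ n := by
  set K : ℝ := (n.choose (r + 1) : ℝ) ^ 2 / (2 * (a + 1) - n) ^ 4
  have hK : 0 ≤ K := by positivity
  have hcenter : ((n : ℝ) - 2 * (n / 2 : ℕ)) ^ 2 ≤ 1 := by
    have h0 : 2 * (n / 2) ≤ n := Nat.mul_div_le n 2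
    have h1 : n ≤ 2 * (n / 2) + 1 := by omega
    have h0' : (2 * (n / 2 : ℕ) : ℝ) ≤ n := by exact_mod_cast h0
    have h1' : (n : ℝ) ≤ 2 * (n / 2 : ℕ) + 1 := by exact_mod_cast h1
    nlinarith
  rw [sum_finset_fin_apply_card n (fun k => ((k.choose (r + 1) : ℝ) - (n / 2).choose (r + 1)) ^ 2)]
  calc _ ≤ ∑ k ∈ range (n + 1), (n.choose k : ℝ) *
        ((a.choose r : ℝ) ^ 2 * ((k : ℝ) - (n / 2 : ℕ)) ^ 2 + K * ((n : ℝ) - 2 * k) ^ 4) := by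
        refine sum_le_sum fun k hk => ?_
        rw [nsmul_eq_mul]
        exact mul_le_mul_of_nonneg_left (sq_choose_succ_sub_choose_succ_le_add r
          (Nat.lt_succ_iff.mp (mem_range.mp hk)) hna (Nat.div_le_self n 2) ha) (by positivity)
    _ = (a.choose r : ℝ) ^ 2 * ∑ k ∈ range (n + 1), (n.choose k : ℝ) * ((k : ℝ) - (n / 2 : ℕ)) ^ 2
        + K * ∑ k ∈ range (n + 1), (n.choose k : ℝ) * ((n : ℝ) - 2 * k) ^ 4 := by
        rw [mul_sum, mul_sum, ← sum_add_distrib]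
        exact sum_congr rfl fun k _ => by ring
    _ ≤ _ := by
        rw [sum_range_choose_mul_sub_sq, sum_range_choose_mul_sub_two_mul_pow_four]
        have h2n : (0 : ℝ) < 2 ^ n := by positivity
        have : (3 * (n : ℝ) ^ 2 - 2 * n) ≤ 3 * n ^ 2 := by linarith [(n.cast_nonneg : (0 : ℝ) ≤ n)]
        nlinarith [mul_le_mul_of_nonneg_left this (mul_nonneg hK h2n.le),
          mul_le_mul_of_nonneg_left hcenter (mul_nonneg (sq_nonneg (a.choose r : ℝ)) h2n.le)]

theorem variance_fam_le (r a : ℕ) {n : ℕ} {l : ℝ} (hl : 1 / 2 ≤ l) (hna : n / 2 ≤ a)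
    (ha : n < 2 * (a + 1)) :
    (∑ A ∈ Fam n l, ((#A).choose (r + 1) : ℝ) ^ 2) / #(Fam n l) -
        ((∑ A ∈ Fam n l, ((#A).choose (r + 1) : ℝ)) / #(Fam n l)) ^ 2 ≤
      (a.choose r : ℝ) ^ 2 * (n + 1) / 2 +
        6 * (n.choose (r + 1) : ℝ) ^ 2 * n ^ 2 / (2 * (a + 1) - n) ^ 4 := by
  set c : ℝ := ↑((n / 2).choose (r + 1))
  set S : ℝ := ∑ A : Finset (Fin n), (((#A).choose (r + 1) : ℝ) - c) ^ 2
  have hS : 0 ≤ S := by positivity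
  have hfam : (2 : ℝ) ^ n ≤ 2 * #(Fam n l) := by exact_mod_cast two_pow_le_two_mul_card_fam hl
  have hfam_pos : (0 : ℝ) < #(Fam n l) := by linarith [pow_pos (two_pos (α := ℝ)) n]
  calc _ ≤ (∑ A ∈ Fam n l, (((#A).choose (r + 1) : ℝ) - c) ^ 2) / #(Fam n l) :=
        sum_sq_div_card_sub_sq_le _ _ c
    _ ≤ S / #(Fam n l) := by
        gcongr
        exact sum_le_sum_of_subset_of_nonneg (subset_univ _) fun _ _ _ => sq_nonneg _
    _ ≤ 2 * S / 2 ^ n := by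
        rw [div_le_div_iff₀ hfam_pos (by positivity)]
        nlinarith
    _ ≤ 2 * (((a.choose r : ℝ) ^ 2 * (n + 1) / 4 +
          (n.choose (r + 1) : ℝ) ^ 2 / (2 * (a + 1) - n) ^ 4 * (3 * n ^ 2)) * 2 ^ n) / 2 ^ n := by
        gcongr
        exact sum_sq_choose_card_sub_le r n a hna ha
    _ = _ := by
        field_simp
        ring

theorem one_add_pow_le_one_div_one_sub_mul {x : ℝ} (hx : 0 ≤ x) {k : ℕ} (hkx : k * x < 1) :
    (1 + x) ^ k ≤ 1 / (1 - k * x) :=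
  calc (1 + x) ^ k ≤ Real.exp x ^ k := by
        gcongr
        linarith [Real.add_one_le_exp x]
    _ = Real.exp (k * x) := (Real.exp_nat_mul x k).symm
    _ ≤ 1 / (1 - k * x) := Real.exp_bound_div_one_sub_of_interval (by positivity) hkx

theorem sq_choose_mul_succ_div_two_le {r n a : ℕ} (hn : 2 ≤ n)
    (ha : (a : ℝ) ≤ (1 / 2 + 1 / (16 * (r + 1))) * n) :
    (a.choose r : ℝ) ^ 2 * (n + 1) / 2 ≤ (n : ℝ) ^ (2 * r + 1) / ((r + 1).factorial : ℝ) ^ 2 := by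
  set x : ℝ := 1 / (8 * (r + 1))
  have hx : 0 ≤ x := by positivity
  have hn' : (2 : ℝ) ≤ n := by exact_mod_cast hn
  have ha' : (a : ℝ) ≤ (1 + x) * n / 2 := by
    convert ha using 1
    simp only [x]
    field_simp
    ring
  have hchoose : (a.choose r : ℝ) ≤ ((1 + x) * n / 2) ^ r / r.factorial :=
    (Nat.choose_le_pow_div r a).trans (by gcongr)
  have hgrowth : (1 + x) ^ (2 * r) ≤ 4 / 3 := by
    have hkx : ((2 * r : ℕ) : ℝ) * x ≤ 1 / 4 := by
      simp only [x]; push_cast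
      rw [mul_one_div, div_le_div_iff₀ (by positivity) (by norm_num)]
      linarith
    calc (1 + x) ^ (2 * r) ≤ 1 / (1 - ((2 * r : ℕ) : ℝ) * x) :=
          one_add_pow_le_one_div_one_sub_mul hx (by linarith)
      _ ≤ 4 / 3 := by
          rw [div_le_div_iff₀ (by linarith) (by norm_num)]
          linarith
  have hsucc : ((r : ℝ) + 1) ^ 2 ≤ (2 ^ r) ^ 2 := by
    gcongr
    exact_mod_cast Nat.lt_two_pow_self
  have hn_succ : ((n : ℝ) + 1) / (2 * n) ≤ 3 / 4 := by
    rw [div_le_div_iff₀ (by positivity) (by norm_num)]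
    linarith
  calc (a.choose r : ℝ) ^ 2 * (n + 1) / 2
      ≤ (((1 + x) * n / 2) ^ r / r.factorial) ^ 2 * (n + 1) / 2 := by gcongr
    _ = (1 + x) ^ (2 * r) * ((n + 1) / (2 * n)) * n ^ (2 * r + 1) /
          ((2 ^ r) ^ 2 * (r.factorial : ℝ) ^ 2) := by
        simp only [div_pow, mul_pow]
        field_simp
        ring
    _ ≤ 4 / 3 * (3 / 4) * n ^ (2 * r + 1) / ((2 ^ r) ^ 2 * (r.factorial : ℝ) ^ 2) := by gcongr
    _ ≤ n ^ (2 * r + 1) / (((r : ℝ) + 1) ^ 2 * (r.factorial : ℝ) ^ 2) := by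
        rw [show (4 / 3 * (3 / 4) : ℝ) = 1 by norm_num, one_mul]
        gcongr
    _ = _ := by
        rw [Nat.factorial_succ]
        push_cast
        ring

theorem six_mul_sq_choose_div_le {r n a : ℕ} {δ ε : ℝ} (hδ : 0 < δ) (hε : 0 < ε) (hn : 0 < n)
    (ha : (1 / 2 + δ) * n < a + 1) (hnε : 3 / (8 * δ ^ 4 * ε) ≤ n) :
    6 * (n.choose (r + 1) : ℝ) ^ 2 * n ^ 2 / (2 * (a + 1) - n) ^ 4 ≤
      ε * n ^ (2 * r + 1) / ((r + 1).factorial : ℝ) ^ 2 := by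
  have hn' : (0 : ℝ) < n := by exact_mod_cast hn
  have hgap : 2 * δ * n ≤ 2 * (a + 1) - n := by linarith
  have hconst : 3 / (8 * δ ^ 4) ≤ ε * n := by
    rw [div_le_iff₀ (by positivity)] at hnε ⊢
    nlinarith
  calc 6 * (n.choose (r + 1) : ℝ) ^ 2 * n ^ 2 / (2 * (a + 1) - n) ^ 4
      ≤ 6 * ((n : ℝ) ^ (r + 1) / (r + 1).factorial) ^ 2 * n ^ 2 / (2 * δ * n) ^ 4 := by
        gcongr
        exact Nat.choose_le_pow_div (r + 1) n
    _ = 3 / (8 * δ ^ 4) * n ^ (2 * r) / ((r + 1).factorial : ℝ) ^ 2 := by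
        field_simp
        ring
    _ ≤ ε * n * n ^ (2 * r) / ((r + 1).factorial : ℝ) ^ 2 := by gcongr
    _ = _ := by ring

theorem stmt4_general (m : ℕ) (hm : 1 ≤ m) (l : ℝ) (hl0 : 1 / 2 < l)
    (ε : ℝ) (hε : 0 < ε) :
    ∃ n₀ : ℕ, ∀ n : ℕ, n₀ ≤ n → 0 < n →
      (∑ A ∈ Fam n l, ((A.card.choose m : ℝ)) ^ 2) / ((Fam n l).card : ℝ) -
        ((∑ A ∈ Fam n l, ((A.card.choose m : ℝ))) / ((Fam n l).card : ℝ)) ^ 2 ≤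
      (1 + ε) * (n : ℝ) ^ (2 * m - 1) / ((m.factorial : ℝ)) ^ 2 := by
  obtain ⟨r, rfl⟩ : ∃ r, m = r + 1 := ⟨m - 1, by omega⟩
  set δ : ℝ := 1 / (16 * (r + 1))
  have hδ : 0 < δ := by positivity
  refine ⟨max 2 ⌈3 / (8 * δ ^ 4 * ε)⌉₊, fun n hn hn0 => ?_⟩
  set a := ⌊(1 / 2 + δ) * n⌋₊
  have ha_le : (a : ℝ) ≤ (1 / 2 + δ) * n := Nat.floor_le (by positivity)
  have ha_lt : (1 / 2 + δ) * n < a + 1 := Nat.lt_floor_add_one _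
  have hna : n / 2 ≤ a := Nat.le_floor <| by
    have : ((n / 2 : ℕ) : ℝ) ≤ n / 2 := Nat.cast_div_le
    nlinarith
  have hna' : n < 2 * (a + 1) := by
    have : (n : ℝ) < 2 * (a + 1) := by nlinarith
    exact_mod_cast this
  calc _ ≤ _ := variance_fam_le r a hl0.le hna hna'
    _ ≤ n ^ (2 * r + 1) / ((r + 1).factorial : ℝ) ^ 2 +
          ε * n ^ (2 * r + 1) / ((r + 1).factorial : ℝ) ^ 2 :=
        add_le_add (sq_choose_mul_succ_div_two_le (by omega) ha_le)
          (six_mul_sq_choose_div_le hδ hε hn0 ha_lt (Nat.ceil_le.mp (le_of_max_le_right hn)))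
    _ = _ := by
        rw [show 2 * (r + 1) - 1 = 2 * r + 1 by omega]
        ring

theorem stmt4 (m : ℕ) (hm : 1 ≤ m) (l : ℝ) (hl0 : 1 / 2 < l) (hl : l ≤ 1)
    (ε : ℝ) (hε : 0 < ε) :
    ∃ n₀ : ℕ, ∀ n : ℕ, n₀ ≤ n → 0 < n →
      (∑ A ∈ Fam n l, ((A.card.choose m : ℝ)) ^ 2) / ((Fam n l).card : ℝ) -
        ((∑ A ∈ Fam n l, ((A.card.choose m : ℝ))) / ((Fam n l).card : ℝ)) ^ 2 ≤
      (1 + ε) * (n : ℝ) ^ (2 * m - 1) / ((m.factorial : ℝ)) ^ 2 :=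
  stmt4_general m hm l hl0 ε hε
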